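/- arXiv:1610.06304 — 2 statements merged into one kernel-verified Lean document; each statement's English description precedes it below -/
import Mathlib

section
/- There exist a constant C₉ and integers N, M such that every solution (n, m, n₁, m₁) of U_n − U_{n₁} = V_m − V_{m₁} with n > n₁ ≥ N₀, m > m₁ ≥ M₀, n ≥ N, m ≥ M satisfies n ≤ m·(log|β| / log|α|) + τ·(log m / log|α|) + C₉; here 0 < log|β|/log|α| < 1. Consequently there exists M₃ such that every such solution with m ≥ M₃ satisfies m > n. -/
open Polynomial

/-- A linear recurrence sequence defined over the integers, together with the data of the
distinct roots of its characteristic polynomial and the polynomial coefficients in its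
Binet-type representation `U n = ∑ i, aᵢ(n) · αᵢⁿ`. By convention the root with index `0`
is the distinguished (dominant) one. -/
structure LinRecSeq where
  /-- the integer sequence -/
  U : ℕ → ℤ
  /-- the order of the recurrence -/
  k : ℕ
  kpos : 0 < k
  /-- the integer coefficients of the recurrence: `c i` stands for `c_{i+1}` -/
  c : Fin k → ℤ
  clast : c ⟨k - 1, by omega⟩ ≠ 0
  recur : ∀ n : ℕ, U (n + k) = ∑ i : Fin k, c i * U (n + (k - 1 - i.val))
  /-- the number of distinct roots of the characteristic polynomial -/
  t : ℕ
  tpos : 0 < t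
  /-- the distinct complex roots of the characteristic polynomial -/
  root : Fin t → ℂ
  root_inj : Function.Injective root
  /-- the multiplicities of the roots -/
  m : Fin t → ℕ
  mpos : ∀ i, 0 < m i
  char_eq : (X : ℂ[X]) ^ k - ∑ i : Fin k, C (c i : ℂ) * X ^ (k - 1 - i.val)
      = ∏ i : Fin t, (X - C (root i)) ^ m i
  /-- the polynomial coefficients `aᵢ` (nonzero, of degree `≤ σᵢ - 1`, with algebraic
  coefficients) -/
  a : Fin t → ℂ[X]
  a_ne : ∀ i, a i ≠ 0
  a_deg : ∀ i, (a i).natDegree ≤ m i - 1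
  a_alg : ∀ i j, IsAlgebraic ℚ ((a i).coeff j)
  formula : ∀ n : ℕ, (U n : ℂ) = ∑ i : Fin t, (a i).eval (n : ℂ) * root i ^ n

namespace LinRecSeq

variable (R : LinRecSeq)

/-- the distinguished index of the dominant root -/
def i0 : Fin R.t := ⟨0, R.tpos⟩

/-- `R` has dominant root `z` if `z` is the distinguished root and all other roots are
strictly smaller in absolute value. -/
def HasDomRoot (z : ℂ) : Prop :=
  R.root R.i0 = z ∧ ∀ i, i ≠ R.i0 → ‖R.root i‖ < ‖z‖

/-- the polynomial coefficient of the dominant root (denoted `a(n)` resp. `b(m)`) -/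
noncomputable def domPoly : ℂ[X] := R.a R.i0

/-- the degree of the polynomial coefficient of the dominant root
(denoted `σ` resp. `τ`) -/
noncomputable def domDeg : ℕ := R.domPoly.natDegree

end LinRecSeq

/-- Two nonzero complex numbers are multiplicatively independent if the only integers
`a, b` with `αᵃ βᵇ = 1` are `a = b = 0`. -/
def MultIndep (α β : ℂ) : Prop := ∀ a b : ℤ, α ^ a * β ^ b = 1 → a = 0 ∧ b = 0


/-! The dominant term of the Binet expansion gives `|U n| ≍ n ^ σ |α| ^ n` and
`|V m| ≍ m ^ τ |β| ^ m`. As `|U|` increases from `N₀` on, `|U n - U n₁| ≥ |U n| - |U (n - 1)|`,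
and this gap is at least `c |α| ^ n` because `|U n| / (n ^ σ |α| ^ n)` has a positive limit and
`|α| > 1`; on the other side `|V m - V m₁| ≤ 2 |V m| ≤ C m ^ τ |β| ^ m`. Taking logarithms bounds
`n`, and since `log m = o(m)` and `log |β| / log |α| < 1` the bound is eventually below `m`. -/

open Filter Topology

theorem Polynomial.tendsto_eval_natCast_div_pow_natDegree {𝕜 : Type*} [Field 𝕜] [CharZero 𝕜]
    [TopologicalSpace 𝕜] [IsTopologicalRing 𝕜] [ContinuousSMul ℚ≥0 𝕜] (P : 𝕜[X]) :
    Tendsto (fun n : ℕ => P.eval (n : 𝕜) / (n : 𝕜) ^ P.natDegree) atTop (𝓝 P.leadingCoeff) := by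
  -- `P(n) / n ^ deg P` is the reversed polynomial evaluated at `1 / n`.
  have hrev : Tendsto (fun n : ℕ => P.reverse.eval (n : 𝕜)⁻¹) atTop (𝓝 P.leadingCoeff) := by
    rw [← coeff_zero_reverse, coeff_zero_eq_eval_zero]
    exact (P.reverse.continuous.tendsto 0).comp tendsto_inv_atTop_nhds_zero_nat
  refine hrev.congr' ?_
  filter_upwards [eventually_ne_atTop 0] with n hn
  have : Invertible (n : 𝕜) := invertibleOfNonzero (Nat.cast_ne_zero.mpr hn)
  rw [eq_div_iff (pow_ne_zero _ (Nat.cast_ne_zero.mpr hn)), ← invOf_eq_inv, eval,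
    eval₂_reverse_mul_pow, eval]

theorem Polynomial.tendsto_eval_mul_pow_div_of_norm_lt {𝕜 : Type*} [RCLike 𝕜] (P : 𝕜[X]) (σ : ℕ)
    {w z : 𝕜} (hwz : ‖w‖ < ‖z‖) :
    Tendsto (fun n : ℕ => P.eval (n : 𝕜) * w ^ n / ((n : 𝕜) ^ σ * z ^ n)) atTop (𝓝 0) := by
  have hz : 0 < ‖z‖ := (norm_nonneg w).trans_lt hwz
  set r := ‖w‖ / ‖z‖
  have hbound : Tendsto (fun n : ℕ => ‖P.eval (n : 𝕜) / (n : 𝕜) ^ P.natDegree‖ *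
      ((n : ℝ) ^ P.natDegree * r ^ n)) atTop (𝓝 (‖P.leadingCoeff‖ * 0)) :=
    (P.tendsto_eval_natCast_div_pow_natDegree.norm).mul
      (tendsto_pow_const_mul_const_pow_of_lt_one _ (by positivity) ((div_lt_one hz).mpr hwz))
  rw [mul_zero] at hbound
  refine squeeze_zero_norm' ?_ hbound
  filter_upwards [eventually_ne_atTop 0] with n hn
  have hn1 : (1 : ℝ) ≤ n := Nat.one_le_cast.mpr (Nat.one_le_iff_ne_zero.mpr hn)
  simp only [norm_div, norm_mul, norm_pow, RCLike.norm_natCast, r, div_pow]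
  calc ‖P.eval (n : 𝕜)‖ * ‖w‖ ^ n / ((n : ℝ) ^ σ * ‖z‖ ^ n)
      ≤ ‖P.eval (n : 𝕜)‖ * ‖w‖ ^ n / ‖z‖ ^ n := by
        gcongr
        exact le_mul_of_one_le_left (by positivity) (one_le_pow₀ hn1)
    _ = ‖P.eval (n : 𝕜)‖ / (n : ℝ) ^ P.natDegree
          * ((n : ℝ) ^ P.natDegree * (‖w‖ ^ n / ‖z‖ ^ n)) := by
        field_simp

namespace LinRecSeq

theorem tendsto_div_dominant (R : LinRecSeq) {z : ℂ} (hz : R.HasDomRoot z) (hz0 : z ≠ 0) :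
    Tendsto (fun n : ℕ => (R.U n : ℂ) / ((n : ℂ) ^ R.domDeg * z ^ n)) atTop
      (𝓝 R.domPoly.leadingCoeff) := by
  have hterm : ∀ i, Tendsto (fun n : ℕ => (R.a i).eval (n : ℂ) * R.root i ^ n /
      ((n : ℂ) ^ R.domDeg * z ^ n)) atTop (𝓝 (if i = R.i0 then R.domPoly.leadingCoeff else 0)) := by
    intro i
    split_ifs with hi
    · subst hi
      refine R.domPoly.tendsto_eval_natCast_div_pow_natDegree.congr fun n => ?_
      rw [hz.1, mul_div_mul_right _ _ (pow_ne_zero n hz0)]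
      rfl
    · exact (R.a i).tendsto_eval_mul_pow_div_of_norm_lt _ (hz.2 i hi)
  have hsum := tendsto_finsetSum Finset.univ fun i _ => hterm i
  rw [Fintype.sum_ite_eq'] at hsum
  refine hsum.congr fun n => ?_
  rw [R.formula, Finset.sum_div]

theorem tendsto_abs_div_dominant (R : LinRecSeq) {z : ℂ} (hz : R.HasDomRoot z) (hz0 : z ≠ 0) :
    Tendsto (fun n : ℕ => |(R.U n : ℝ)| / ((n : ℝ) ^ R.domDeg * ‖z‖ ^ n)) atTop
      (𝓝 ‖R.domPoly.leadingCoeff‖) := by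
  refine (R.tendsto_div_dominant hz hz0).norm.congr fun n => ?_
  simp only [norm_div, norm_mul, norm_pow, Complex.norm_natCast, Complex.norm_intCast]

theorem domPoly_leadingCoeff_ne_zero (R : LinRecSeq) : R.domPoly.leadingCoeff ≠ 0 :=
  leadingCoeff_ne_zero.mpr (R.a_ne R.i0)

end LinRecSeq

theorem eventually_mul_pow_le_sub_succ {f : ℕ → ℝ} {σ : ℕ} {A L : ℝ} (hA : 1 < A)
    (hL : 0 < L) (hf : Tendsto (fun n : ℕ => f n / ((n : ℝ) ^ σ * A ^ n)) atTop (𝓝 L)) :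
    ∀ᶠ n in atTop, (A - 1) * L / 2 * A ^ n ≤ f (n + 1) - f n := by
  have hA0 : 0 < A := one_pos.trans hA
  have hratio : Tendsto (fun n : ℕ => A * (f (n + 1) / (((n : ℝ) + 1) ^ σ * A ^ (n + 1)))
      - ((n : ℝ) / (n + 1)) ^ σ * (f n / ((n : ℝ) ^ σ * A ^ n))) atTop
      (𝓝 (A * L - 1 ^ σ * L)) := by
    have hshift := hf.comp (tendsto_add_atTop_nat 1)
    simp only [Function.comp_def, Nat.cast_add, Nat.cast_one] at hshift
    exact (hshift.const_mul A).sub (((tendsto_natCast_div_add_atTop (1 : ℝ)).pow σ).mul hf)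
  rw [one_pow, one_mul] at hratio
  have hlimit : (A - 1) * L / 2 < A * L - L := by nlinarith
  filter_upwards [hratio.eventually (eventually_gt_nhds hlimit), eventually_ne_atTop 0]
    with n hgap hn0
  have hn : (0 : ℝ) < n := Nat.cast_pos.mpr (Nat.pos_of_ne_zero hn0)
  have hsplit : A * (f (n + 1) / (((n : ℝ) + 1) ^ σ * A ^ (n + 1)))
      - ((n : ℝ) / (n + 1)) ^ σ * (f n / ((n : ℝ) ^ σ * A ^ n))
      = (f (n + 1) - f n) / (((n : ℝ) + 1) ^ σ * A ^ n) := by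
    rw [div_pow]
    field_simp
    ring
  rw [hsplit, lt_div_iff₀ (by positivity)] at hgap
  calc (A - 1) * L / 2 * A ^ n ≤ (A - 1) * L / 2 * (((n : ℝ) + 1) ^ σ * A ^ n) := by
        gcongr
        exact le_mul_of_one_le_left (by positivity) (one_le_pow₀ (by linarith))
    _ ≤ f (n + 1) - f n := hgap.le

theorem exists_mul_pow_le_abs_sub {u : ℕ → ℝ} {σ N₀ : ℕ} {A L : ℝ} (hA : 1 < A) (hL : 0 < L)
    (hu : Tendsto (fun n : ℕ => |u n| / ((n : ℝ) ^ σ * A ^ n)) atTop (𝓝 L))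
    (hmono : MonotoneOn (fun n => |u n|) (Set.Ici N₀)) :
    ∃ c > 0, ∃ N : ℕ, ∀ n n₁ : ℕ, N₀ ≤ n₁ → n₁ < n → N ≤ n → c * A ^ n ≤ |u n - u n₁| := by
  have hA0 : 0 < A := one_pos.trans hA
  obtain ⟨N, hN⟩ := eventually_atTop.mp (eventually_mul_pow_le_sub_succ hA hL hu)
  refine ⟨(A - 1) * L / 2 / A, by have := sub_pos.mpr hA; positivity, N + 1,
    fun n n₁ hn₁ hn₁n hNn => ?_⟩
  obtain ⟨p, rfl⟩ : ∃ p, n = p + 1 := ⟨n - 1, by omega⟩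
  have hp : |u n₁| ≤ |u p| := hmono hn₁ (Set.mem_Ici.mpr (by omega)) (by omega)
  calc (A - 1) * L / 2 / A * A ^ (p + 1) = (A - 1) * L / 2 * A ^ p := by
        field_simp
        ring
    _ ≤ |u (p + 1)| - |u p| := hN p (by omega)
    _ ≤ |u (p + 1)| - |u n₁| := by linarith
    _ ≤ |u (p + 1) - u n₁| := abs_sub_abs_le_abs_sub _ _

theorem exists_abs_sub_le_mul_pow {v : ℕ → ℝ} {τ M₀ : ℕ} {B L : ℝ} (hB : 0 < B)
    (hv : Tendsto (fun m : ℕ => |v m| / ((m : ℝ) ^ τ * B ^ m)) atTop (𝓝 L))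
    (hmono : MonotoneOn (fun m => |v m|) (Set.Ici M₀)) :
    ∃ C > 0, ∃ M : ℕ, ∀ m m₁ : ℕ, M₀ ≤ m₁ → m₁ < m → M ≤ m →
      |v m - v m₁| ≤ C * ((m : ℝ) ^ τ * B ^ m) := by
  have hlt : ∀ᶠ m : ℕ in atTop, |v m| / ((m : ℝ) ^ τ * B ^ m) < |L| + 1 :=
    hv.eventually (eventually_lt_nhds (by linarith [le_abs_self L]))
  obtain ⟨M, hM⟩ := eventually_atTop.mp (hlt.and (eventually_ne_atTop 0))
  refine ⟨2 * (|L| + 1), by positivity, M, fun m m₁ hm₁ hm₁m hMm => ?_⟩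
  obtain ⟨hratio, hm0⟩ := hM m hMm
  have hm : (0 : ℝ) < m := Nat.cast_pos.mpr (Nat.pos_of_ne_zero hm0)
  have hvm : |v m| ≤ (|L| + 1) * ((m : ℝ) ^ τ * B ^ m) :=
    ((div_lt_iff₀ (by positivity)).mp hratio).le
  have hm₁ : |v m₁| ≤ |v m| := hmono hm₁ (Set.mem_Ici.mpr (by omega)) hm₁m.le
  calc |v m - v m₁| ≤ |v m| + |v m₁| := abs_sub _ _
    _ ≤ 2 * (|L| + 1) * ((m : ℝ) ^ τ * B ^ m) := by linarith

theorem natCast_le_of_mul_pow_le_mul_pow {A B c C : ℝ} {n m τ : ℕ} (hA : 1 < A) (hB : 0 < B)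
    (hc : 0 < c) (hC : 0 < C) (hm : 0 < m) (h : c * A ^ n ≤ C * ((m : ℝ) ^ τ * B ^ m)) :
    (n : ℝ) ≤ m * (Real.log B / Real.log A) + τ * (Real.log m / Real.log A)
      + (Real.log C - Real.log c) / Real.log A := by
  have hA0 : 0 < A := one_pos.trans hA
  have hm' : (0 : ℝ) < m := Nat.cast_pos.mpr hm
  have hlog := Real.log_le_log (by positivity) h
  rw [Real.log_mul hc.ne' (by positivity), Real.log_mul hC.ne' (by positivity),
    Real.log_mul (by positivity) (by positivity), Real.log_pow, Real.log_pow,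
    Real.log_pow] at hlog
  have hlogA := Real.log_pos hA
  calc (n : ℝ) = n * Real.log A / Real.log A := by field_simp
    _ ≤ (m * Real.log B + τ * Real.log m + (Real.log C - Real.log c)) / Real.log A := by
        gcongr
        linarith
    _ = _ := by ring

theorem eventually_mul_add_mul_log_add_lt {θ : ℝ} (hθ : θ < 1) (a C : ℝ) :
    ∀ᶠ m : ℕ in atTop, (m : ℝ) * θ + a * Real.log m + C < m := by
  have hlog : Tendsto (fun m : ℕ => Real.log m / m) atTop (𝓝 0) :=
    Real.isLittleO_log_id_atTop.tendsto_div_nhds_zero.comp tendsto_natCast_atTop_atTop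
  have hsmall : Tendsto (fun m : ℕ => a * (Real.log m / m) + C / m) atTop (𝓝 (a * 0 + 0)) :=
    (hlog.const_mul a).add (tendsto_const_div_atTop_nhds_zero_nat C)
  rw [mul_zero, add_zero] at hsmall
  filter_upwards [hsmall.eventually (eventually_lt_nhds (sub_pos.mpr hθ)),
    eventually_ne_atTop 0] with m hm hm0
  have hm' : (0 : ℝ) < m := Nat.cast_pos.mpr (Nat.pos_of_ne_zero hm0)
  rw [← mul_div_assoc, ← add_div, div_lt_iff₀ hm'] at hm
  linarith

theorem index_comparison_general (Ru Rv : LinRecSeq) (α β : ℂ)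
    (hU : Ru.HasDomRoot α) (hV : Rv.HasDomRoot β)
    (hβ1 : 1 < ‖β‖) (hβα : ‖β‖ < ‖α‖)
    (N₀ M₀ : ℕ)
    (hUmono : ∀ n : ℕ, N₀ ≤ n → 0 < |Ru.U n| ∧ |Ru.U n| < |Ru.U (n + 1)|)
    (hVmono : ∀ m : ℕ, M₀ ≤ m → 0 < |Rv.U m| ∧ |Rv.U m| < |Rv.U (m + 1)|) :
    0 < Real.log (‖β‖) / Real.log (‖α‖) ∧
    Real.log (‖β‖) / Real.log (‖α‖) < 1 ∧
    ∃ C₉ : ℝ, ∃ N M : ℕ,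
      (∀ n m n₁ m₁ : ℕ, N₀ ≤ n₁ → n₁ < n → M₀ ≤ m₁ → m₁ < m → N ≤ n → M ≤ m →
        Ru.U n - Ru.U n₁ = Rv.U m - Rv.U m₁ →
        (n : ℝ) ≤ (m : ℝ) * (Real.log (‖β‖) / Real.log (‖α‖))
          + (Rv.domDeg : ℝ) * (Real.log m / Real.log (‖α‖)) + C₉) ∧
      ∃ M₃ : ℕ, ∀ n m n₁ m₁ : ℕ, N₀ ≤ n₁ → n₁ < n → M₀ ≤ m₁ → m₁ < m → N ≤ n → M ≤ m →
        M₃ ≤ m → Ru.U n - Ru.U n₁ = Rv.U m - Rv.U m₁ → n < m := by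
  have hα1 : 1 < ‖α‖ := hβ1.trans hβα
  have hlogα := Real.log_pos hα1
  have hθ1 : Real.log ‖β‖ / Real.log ‖α‖ < 1 :=
    (div_lt_one hlogα).mpr (Real.log_lt_log (one_pos.trans hβ1) hβα)
  refine ⟨div_pos (Real.log_pos hβ1) hlogα, hθ1, ?_⟩
  obtain ⟨c, hc, N, hlower⟩ := exists_mul_pow_le_abs_sub hα1
    (norm_pos_iff.mpr Ru.domPoly_leadingCoeff_ne_zero)
    (Ru.tendsto_abs_div_dominant hU (norm_pos_iff.mp (one_pos.trans hα1)))
    (monotoneOn_nat_Ici_of_le_succ fun n hn => by exact_mod_cast (hUmono n hn).2.le)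
  obtain ⟨C, hC, M, hupper⟩ := exists_abs_sub_le_mul_pow (one_pos.trans hβ1)
    (Rv.tendsto_abs_div_dominant hV (norm_pos_iff.mp (one_pos.trans hβ1)))
    (monotoneOn_nat_Ici_of_le_succ fun m hm => by exact_mod_cast (hVmono m hm).2.le)
  have hbound : ∀ n m n₁ m₁ : ℕ, N₀ ≤ n₁ → n₁ < n → M₀ ≤ m₁ → m₁ < m → N ≤ n → M ≤ m →
      Ru.U n - Ru.U n₁ = Rv.U m - Rv.U m₁ →
      (n : ℝ) ≤ m * (Real.log ‖β‖ / Real.log ‖α‖) + Rv.domDeg * (Real.log m / Real.log ‖α‖)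
        + (Real.log C - Real.log c) / Real.log ‖α‖ := by
    intro n m n₁ m₁ hn₁ hn₁n hm₁ hm₁m hNn hMm heq
    have heqR : (Ru.U n : ℝ) - Ru.U n₁ = Rv.U m - Rv.U m₁ := by exact_mod_cast heq
    refine natCast_le_of_mul_pow_le_mul_pow hα1 (one_pos.trans hβ1) hc hC (by omega) ?_
    calc c * ‖α‖ ^ n ≤ |(Ru.U n : ℝ) - Ru.U n₁| := hlower n n₁ hn₁ hn₁n hNn
      _ = |(Rv.U m : ℝ) - Rv.U m₁| := by rw [heqR]
      _ ≤ _ := hupper m m₁ hm₁ hm₁m hMm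
  refine ⟨_, N, M, hbound, ?_⟩
  obtain ⟨M₃, hM₃⟩ := eventually_atTop.mp (eventually_mul_add_mul_log_add_lt hθ1
    (Rv.domDeg / Real.log ‖α‖) ((Real.log C - Real.log c) / Real.log ‖α‖))
  refine ⟨M₃, fun n m n₁ m₁ hn₁ hn₁n hm₁ hm₁m hNn hMm hM₃m heq => ?_⟩
  have hm := hM₃ m hM₃m
  rw [div_mul_eq_mul_div, mul_div_assoc] at hm
  exact_mod_cast (hbound n m n₁ m₁ hn₁ hn₁n hm₁ hm₁m hNn hMm heq).trans_lt hm

/-- **Comparison of indices.** There are a constant `C₉` and integers `N, M` such that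
every solution `(n, m, n₁, m₁)` of `U n − U n₁ = V m − V m₁` with `n > n₁ ≥ N₀`,
`m > m₁ ≥ M₀`, `n ≥ N`, `m ≥ M` satisfies
`n ≤ m·(log|β|/log|α|) + τ·(log m/log|α|) + C₉`, where `0 < log|β|/log|α| < 1`.
Consequently there is `M₃` such that every such solution with `m ≥ M₃` has `m > n`. -/
theorem index_comparison (Ru Rv : LinRecSeq) (α β : ℂ)
    (hU : Ru.HasDomRoot α) (hV : Rv.HasDomRoot β)
    (hindep : MultIndep α β)
    (hβ1 : 1 < ‖β‖) (hβα : ‖β‖ < ‖α‖)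
    (N₀ M₀ : ℕ)
    (hUmono : ∀ n : ℕ, N₀ ≤ n → 0 < |Ru.U n| ∧ |Ru.U n| < |Ru.U (n + 1)|)
    (hVmono : ∀ m : ℕ, M₀ ≤ m → 0 < |Rv.U m| ∧ |Rv.U m| < |Rv.U (m + 1)|) :
    0 < Real.log (‖β‖) / Real.log (‖α‖) ∧
    Real.log (‖β‖) / Real.log (‖α‖) < 1 ∧
    ∃ C₉ : ℝ, ∃ N M : ℕ,
      (∀ n m n₁ m₁ : ℕ, N₀ ≤ n₁ → n₁ < n → M₀ ≤ m₁ → m₁ < m → N ≤ n → M ≤ m →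
        Ru.U n - Ru.U n₁ = Rv.U m - Rv.U m₁ →
        (n : ℝ) ≤ (m : ℝ) * (Real.log (‖β‖) / Real.log (‖α‖))
          + (Rv.domDeg : ℝ) * (Real.log m / Real.log (‖α‖)) + C₉) ∧
      ∃ M₃ : ℕ, ∀ n m n₁ m₁ : ℕ, N₀ ≤ n₁ → n₁ < n → M₀ ≤ m₁ → m₁ < m → N ≤ n → M ≤ m →
        M₃ ≤ m → Ru.U n - Ru.U n₁ = Rv.U m - Rv.U m₁ → n < m :=
  index_comparison_general Ru Rv α β hU hV hβ1 hβα N₀ M₀ hUmono hVmono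
end

section
/- Set γ = |β|^{log α' / log |α|} and Γ = min{ |β|/β', |β|/γ }, so Γ > 1. There exist a constant C₄₀ > 0 and integers N, M such that every solution (n, m, n₁, m₁) of U_n − U_{n₁} = V_m − V_{m₁} with n > n₁ ≥ N₀, m > m₁ ≥ M₀, n ≥ N, m ≥ M satisfies b(m)·β^m − b(m₁)·β^{m₁} ≠ 0 and | (a(n)·α^n − a(n₁)·α^{n₁}) / (b(m)·β^m − b(m₁)·β^{m₁}) − 1 | ≤ C₄₀ · Γ^{−m}. -/
open Polynomial

/-- `γ = |β|^(log α'/log |α|)` -/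
noncomputable def gammaConst (α β : ℂ) (α' : ℝ) : ℝ :=
  ‖β‖ ^ (Real.log α' / Real.log (‖α‖))

/-- `Γ = min{|β|/β', |β|/γ}` -/
noncomputable def GammaConst (α β : ℂ) (α' β' : ℝ) : ℝ :=
  min (‖β‖ / β') (‖β‖ / gammaConst α β α')

/-!
Write `U n = a(n) αⁿ + tail n` with a tail of size `O(rⁿ)` for some `r < α'`, and likewise
`V m = b(m) βᵐ + tail m` with a tail of size `O(sᵐ)`, `s < β'`. On a solution the dominant
differences `a(n)αⁿ - a(n₁)α^{n₁}` and `b(m)βᵐ - b(m₁)β^{m₁}` then differ by `O(rⁿ + sᵐ)`.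
Each of them has exact size `|α|ⁿ` resp. `|β|ᵐ`, since `p(n₁)α^{n₁}` is smaller than `p(n)αⁿ`
by roughly the factor `|α|^{n - n₁}`. Comparing sizes gives `|α|ⁿ ≪ tᵐ` for every `t > |β|`;
raising this to the power `log r / log |α|`, for the `t` with `t ^ (log r / log |α|) = γ`,
gives `rⁿ ≪ γᵐ`. Dividing the error `O(γᵐ + β'ᵐ)` by `|b(m)βᵐ - b(m₁)β^{m₁}| ≫ |β|ᵐ` leaves
`O(Γ^{-m})`.
-/
open Filter Topology Asymptotics

theorem exists_norm_sub_le_mul_pow {E : Type*} [NormedAddCommGroup E] {f : ℕ → E} {r : ℝ}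
    (hr : 1 ≤ r) (hf : f =O[atTop] fun n => r ^ n) :
    ∃ C ≥ 0, ∀ ⦃n₁ n : ℕ⦄, n₁ ≤ n → ‖f n - f n₁‖ ≤ C * r ^ n := by
  have hr0 : 0 < r := zero_lt_one.trans_le hr
  obtain ⟨C, hC⟩ := (isBigO_nat_atTop_iff fun n h => absurd h (pow_ne_zero n hr0.ne')).mp hf
  simp only [Real.norm_of_nonneg (pow_nonneg hr0.le _)] at hC
  have hC0 : 0 ≤ C := by simpa using (norm_nonneg _).trans (hC 0)
  refine ⟨2 * C, by positivity, fun n₁ n h => ?_⟩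
  have hpow : C * r ^ n₁ ≤ C * r ^ n := by gcongr
  linarith [norm_sub_le (f n) (f n₁), hC n, hC n₁]

theorem exists_le_mul_of_tendsto_div_pow {f : ℕ → ℝ} {L l : ℝ} {d : ℕ} (hL : 0 < L) (hl : 1 < l)
    (hf : Tendsto (fun n => f n / (n : ℝ) ^ d) atTop (𝓝 L)) :
    ∃ c > 0, ∃ N, (∀ n ≥ N, c ≤ f n) ∧ ∀ n₁ n, N ≤ n₁ → n₁ ≤ n → f n₁ ≤ l * f n := by
  set h := fun n => f n / (n : ℝ) ^ d
  have hpair : Tendsto (fun k : ℕ × ℕ => h k.1 - l * h k.2) atTop (𝓝 (L - l * L)) := by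
    rw [← prod_atTop_atTop_eq]
    exact (hf.comp tendsto_fst).sub ((hf.comp tendsto_snd).const_mul l)
  obtain ⟨N₁, hN₁⟩ := eventually_atTop_prod_self.mp
    (hpair.eventually (gt_mem_nhds (by nlinarith : L - l * L < 0)))
  obtain ⟨N₂, hN₂⟩ := eventually_atTop.mp
    ((hf.eventually (lt_mem_nhds (half_lt_self hL))).and (eventually_ge_atTop 1))
  have hfh : ∀ n ≥ N₂, f n = h n * (n : ℝ) ^ d := fun n hn => by
    have hn0 : (n : ℝ) ≠ 0 := Nat.cast_ne_zero.mpr (Nat.one_le_iff_ne_zero.mp (hN₂ n hn).2)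
    exact (div_mul_cancel₀ _ (pow_ne_zero _ hn0)).symm
  refine ⟨L / 2, half_pos hL, max N₁ N₂, fun n hn => ?_, fun n₁ n hn₁ hn => ?_⟩
  · obtain ⟨hhn, hn1⟩ := hN₂ n (le_of_max_le_right hn)
    rw [hfh n (le_of_max_le_right hn)]
    have : (1 : ℝ) ≤ (n : ℝ) ^ d := one_le_pow₀ (by exact_mod_cast hn1)
    nlinarith
  · have hn' : max N₁ N₂ ≤ n := hn₁.trans hn
    have hlt := hN₁ n₁ n (le_of_max_le_left hn₁) (le_of_max_le_left hn')
    have hpos := (hN₂ n (le_of_max_le_right hn')).1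
    rw [hfh n₁ (le_of_max_le_right hn₁), hfh n (le_of_max_le_right hn')]
    have hd : (n₁ : ℝ) ^ d ≤ (n : ℝ) ^ d := by gcongr
    calc h n₁ * (n₁ : ℝ) ^ d ≤ l * h n * (n₁ : ℝ) ^ d := by gcongr; linarith
      _ ≤ l * h n * (n : ℝ) ^ d := by gcongr; exact mul_nonneg (by linarith) (by linarith)
      _ = l * (h n * (n : ℝ) ^ d) := by ring

theorem exists_forall_lt_mul_pow_le {f : ℕ → ℝ} {A l c : ℝ} {N : ℕ} (hA : 1 < A) (hl : 0 < l)
    (hc : 0 < c) (hlow : ∀ n ≥ N, c ≤ f n) (hmono : ∀ n₁ n, N ≤ n₁ → n₁ ≤ n → f n₁ ≤ l * f n) :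
    ∃ N', ∀ n ≥ N', ∀ n₁ < n, f n₁ * A ^ n₁ ≤ l / A * (f n * A ^ n) := by
  have hA0 : 0 < A := zero_lt_one.trans hA
  obtain ⟨K, hK⟩ := ((Set.finite_Iio N).image fun j => f j * A ^ j).bddAbove
  have hgrow : Tendsto (fun n => l / A * c * A ^ n) atTop atTop :=
    (tendsto_pow_atTop_atTop_of_one_lt hA).const_mul_atTop (by positivity)
  obtain ⟨N₂, hN₂⟩ := eventually_atTop.mp (hgrow.eventually_ge_atTop K)
  refine ⟨max (N + 1) N₂, fun n hn n₁ hn₁ => ?_⟩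
  have hfn : c ≤ f n := hlow n (by omega)
  rcases lt_or_ge n₁ N with hsmall | hlarge
  · calc f n₁ * A ^ n₁ ≤ K := hK ⟨n₁, hsmall, rfl⟩
      _ ≤ l / A * c * A ^ n := hN₂ n (le_of_max_le_right hn)
      _ ≤ l / A * (f n * A ^ n) := by rw [mul_assoc]; gcongr
  · have hpow : A ^ n₁ ≤ A ^ n / A := by
      rw [le_div_iff₀ hA0, ← pow_succ]
      exact pow_le_pow_right₀ hA.le hn₁
    calc f n₁ * A ^ n₁ ≤ l * f n * (A ^ n / A) := by
          gcongr
          · exact mul_nonneg hl.le (hc.le.trans hfn)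
          · exact hmono n₁ n hlarge hn₁.le
      _ = l / A * (f n * A ^ n) := by ring

theorem pow_le_rpow_neg_mul_pow {x B Γ : ℝ} (hx : 0 < x) (hΓ : 0 < Γ) (h : Γ ≤ B / x) (m : ℕ) :
    x ^ m ≤ Γ ^ (-(m : ℝ)) * B ^ m := by
  rw [Real.rpow_neg hΓ.le, Real.rpow_natCast, ← inv_pow, ← mul_pow]
  gcongr
  rw [le_inv_mul_iff₀ hΓ, ← le_div_iff₀ hx]
  exact h

theorem norm_div_sub_one_le {𝕜 : Type*} [NormedField 𝕜] {x y : 𝕜} {c E : ℝ} (hc : 0 < c)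
    (hy : c ≤ ‖y‖) (h : ‖x - y‖ ≤ E) : ‖x / y - 1‖ ≤ E / c := by
  rw [div_sub_one (norm_pos_iff.mp (hc.trans_le hy)), norm_div]
  exact div_le_div₀ ((norm_nonneg _).trans h) h hc hy

namespace Polynomial

variable {𝕜 : Type*} [RCLike 𝕜]

theorem tendsto_eval_natCast_div_pow_natDegree_s11 (p : 𝕜[X]) :
    Tendsto (fun n : ℕ => p.eval (n : 𝕜) / (n : 𝕜) ^ p.natDegree) atTop (𝓝 p.leadingCoeff) := by
  have hrev : Tendsto (fun n : ℕ => p.reverse.eval (n : 𝕜)⁻¹) atTop (𝓝 p.leadingCoeff) := by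
    rw [← coeff_zero_reverse, coeff_zero_eq_eval_zero]
    exact (p.reverse.continuous.tendsto 0).comp tendsto_inv_atTop_nhds_zero_nat
  -- `p(x) / x ^ deg p` is the reversed polynomial evaluated at `x⁻¹`
  refine hrev.congr' ((eventually_ne_atTop 0).mono fun n hn => ?_)
  have hn' : (n : 𝕜) ≠ 0 := Nat.cast_ne_zero.mpr hn
  let := invertibleOfNonzero hn'
  have h := eval₂_reverse_mul_pow (RingHom.id 𝕜) (n : 𝕜) p
  rw [eval₂_id, eval₂_id, invOf_eq_inv] at h
  simp only [← h, mul_div_cancel_right₀ _ (pow_ne_zero _ hn')]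

theorem isBigO_eval_natCast_pow (p : 𝕜[X]) {s : ℝ} (hs : 1 < s) :
    (fun n : ℕ => p.eval (n : 𝕜)) =O[atTop] (fun n => s ^ n) := by
  simp only [eval_eq_sum_range]
  refine IsBigO.fun_sum fun i _ => IsBigO.const_mul_left ?_ _
  refine IsBigO.trans ?_ (isLittleO_pow_const_const_pow_of_one_lt (R := ℝ) i hs).isBigO
  exact isBigO_of_le _ fun n => by simp

theorem isBigO_eval_natCast_mul_pow (p : 𝕜[X]) {z : 𝕜} {r : ℝ} (hz : ‖z‖ < r) :
    (fun n : ℕ => p.eval (n : 𝕜) * z ^ n) =O[atTop] (fun n => r ^ n) := by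
  obtain ⟨ρ, hzρ, hρr⟩ := exists_between hz
  have hρ : 0 < ρ := (norm_nonneg z).trans_lt hzρ
  have hpoly := p.isBigO_eval_natCast_pow (s := r / ρ) ((one_lt_div hρ).mpr hρr)
  have hpow : (fun n : ℕ => z ^ n) =O[atTop] (fun n => ρ ^ n) :=
    isBigO_of_le _ fun n => by
      rw [norm_pow, norm_pow, Real.norm_of_nonneg hρ.le]
      exact pow_le_pow_left₀ (norm_nonneg z) hzρ.le n
  refine (hpoly.mul hpow).congr_right fun n => ?_
  rw [← mul_pow, div_mul_cancel₀ _ hρ.ne']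

theorem exists_mul_pow_le_norm_sub (p : 𝕜[X]) (hp : p ≠ 0) {z : 𝕜} (hz : 1 < ‖z‖) :
    ∃ c > 0, ∃ N : ℕ, ∀ n ≥ N, ∀ n₁ < n,
      c * ‖z‖ ^ n ≤ ‖p.eval (n : 𝕜) * z ^ n - p.eval (n₁ : 𝕜) * z ^ n₁‖ := by
  set A := ‖z‖
  have hlim : Tendsto (fun n : ℕ => ‖p.eval (n : 𝕜)‖ / (n : ℝ) ^ p.natDegree) atTop
      (𝓝 ‖p.leadingCoeff‖) := by
    simpa [norm_div, norm_pow] using p.tendsto_eval_natCast_div_pow_natDegree_s11.norm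
  obtain ⟨c, hc, N, hlow, hmono⟩ := exists_le_mul_of_tendsto_div_pow
    (norm_pos_iff.mpr (leadingCoeff_ne_zero.mpr hp)) (by linarith : 1 < (1 + A) / 2) hlim
  obtain ⟨N', hN'⟩ := exists_forall_lt_mul_pow_le hz (by positivity) hc hlow hmono
  have hθ : (1 + A) / 2 / A < 1 := by rw [div_lt_one (by positivity)]; linarith
  refine ⟨(1 - (1 + A) / 2 / A) * c, mul_pos (by linarith) hc, max N N', fun n hn n₁ hn₁ => ?_⟩
  have hsmall := hN' n (le_of_max_le_right hn) n₁ hn₁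
  calc (1 - (1 + A) / 2 / A) * c * A ^ n
      ≤ (1 - (1 + A) / 2 / A) * (‖p.eval (n : 𝕜)‖ * A ^ n) := by
        rw [mul_assoc]; gcongr
        exact hlow n (le_of_max_le_left hn)
    _ ≤ ‖p.eval (n : 𝕜) * z ^ n‖ - ‖p.eval (n₁ : 𝕜) * z ^ n₁‖ := by
        simp only [norm_mul, norm_pow]; linarith
    _ ≤ _ := norm_sub_norm_le _ _

end Polynomial

theorem gammaConst_lt_norm {α β : ℂ} {α' : ℝ} (hα'1 : 1 < α') (hα'2 : α' < ‖α‖) (hβ : 1 < ‖β‖) :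
    gammaConst α β α' < ‖β‖ := by
  have hα : 1 < ‖α‖ := hα'1.trans hα'2
  calc gammaConst α β α' < ‖β‖ ^ (1 : ℝ) := by
        refine Real.rpow_lt_rpow_of_exponent_lt hβ ?_
        rw [div_lt_one (Real.log_pos hα)]
        exact Real.log_lt_log (by linarith) hα'2
    _ = ‖β‖ := Real.rpow_one _

theorem one_lt_GammaConst {α β : ℂ} {α' β' : ℝ} (hα'1 : 1 < α') (hα'2 : α' < ‖α‖)
    (hβ'1 : 1 < β') (hβ'2 : β' < ‖β‖) : 1 < GammaConst α β α' β' := by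
  have hγ : 0 < gammaConst α β α' := Real.rpow_pos_of_pos (by linarith) _
  exact lt_min ((one_lt_div (by linarith)).mpr hβ'2)
    ((one_lt_div hγ).mpr (gammaConst_lt_norm hα'1 hα'2 (hβ'1.trans hβ'2)))

theorem pow_add_pow_le_GammaConst_rpow_neg {α β : ℂ} {α' β' : ℝ} (hα'1 : 1 < α')
    (hα'2 : α' < ‖α‖) (hβ'1 : 1 < β') (hβ'2 : β' < ‖β‖) (m : ℕ) :
    gammaConst α β α' ^ m + β' ^ m ≤ 2 * GammaConst α β α' β' ^ (-(m : ℝ)) * ‖β‖ ^ m := by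
  have hΓ := zero_lt_one.trans (one_lt_GammaConst hα'1 hα'2 hβ'1 hβ'2)
  have hγ : gammaConst α β α' ^ m ≤ _ :=
    pow_le_rpow_neg_mul_pow (Real.rpow_pos_of_pos (by linarith) _) hΓ (min_le_right _ _) m
  have hβ' := pow_le_rpow_neg_mul_pow (by linarith) hΓ (min_le_left _ _) m
  linarith

namespace LinRecSeq

variable (R : LinRecSeq)

noncomputable def tail (n : ℕ) : ℂ :=
  ∑ i ∈ Finset.univ.erase R.i0, (R.a i).eval (n : ℂ) * R.root i ^ n

theorem U_eq_add_tail (n : ℕ) :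
    (R.U n : ℂ) = R.domPoly.eval (n : ℂ) * R.root R.i0 ^ n + R.tail n := by
  rw [R.formula n, tail, domPoly,
    Finset.add_sum_erase _ (fun i => (R.a i).eval (n : ℂ) * R.root i ^ n) (Finset.mem_univ _)]

theorem exists_isBigO_tail {α' : ℝ} (hα' : 1 < α') (hroots : ∀ i, i ≠ R.i0 → ‖R.root i‖ < α') :
    ∃ r, 1 < r ∧ r < α' ∧ R.tail =O[atTop] fun n => r ^ n := by
  have hev : ∀ᶠ r in 𝓝 α', 1 < r ∧ ∀ i ∈ Finset.univ.erase R.i0, ‖R.root i‖ < r :=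
    (eventually_gt_nhds hα').and <| (eventually_all_finset _).mpr fun i hi =>
      eventually_gt_nhds (hroots i (Finset.ne_of_mem_erase hi))
  obtain ⟨r, ⟨hr1, hr⟩, hrα'⟩ := ((hev.filter_mono nhdsWithin_le_nhds).and
    (self_mem_nhdsWithin : ∀ᶠ r in 𝓝[<] α', r < α')).exists
  exact ⟨r, hr1, hrα', IsBigO.fun_sum fun i hi => (R.a i).isBigO_eval_natCast_mul_pow (hr i hi)⟩

end LinRecSeq

theorem norm_sub_le_of_U_sub_eq {Ru Rv : LinRecSeq} {α β : ℂ} (hα : Ru.root Ru.i0 = α)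
    (hβ : Rv.root Rv.i0 = β) {n n₁ m m₁ : ℕ} (h : Ru.U n - Ru.U n₁ = Rv.U m - Rv.U m₁) :
    ‖(Ru.domPoly.eval (n : ℂ) * α ^ n - Ru.domPoly.eval (n₁ : ℂ) * α ^ n₁) -
        (Rv.domPoly.eval (m : ℂ) * β ^ m - Rv.domPoly.eval (m₁ : ℂ) * β ^ m₁)‖ ≤
      ‖Ru.tail n - Ru.tail n₁‖ + ‖Rv.tail m - Rv.tail m₁‖ := by
  have hC : (Ru.U n : ℂ) - Ru.U n₁ = Rv.U m - Rv.U m₁ := by exact_mod_cast h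
  simp only [LinRecSeq.U_eq_add_tail, hα, hβ] at hC
  calc _ = ‖(Rv.tail m - Rv.tail m₁) - (Ru.tail n - Ru.tail n₁)‖ := by
        congr 1; linear_combination hC
    _ ≤ _ := (norm_sub_le _ _).trans_eq (add_comm _ _)

theorem exists_pow_le_mul_pow_of_U_sub_eq {Ru Rv : LinRecSeq} {α β : ℂ}
    (hα : Ru.root Ru.i0 = α) (hβ : Rv.root Rv.i0 = β) {r s t CU CV : ℝ}
    (hr : 1 ≤ r) (hrα : r < ‖α‖)
    (hU : ∀ ⦃n₁ n : ℕ⦄, n₁ ≤ n → ‖Ru.tail n - Ru.tail n₁‖ ≤ CU * r ^ n)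
    (hs : 1 ≤ s) (hst : s ≤ t) (hCV : 0 ≤ CV)
    (hV : ∀ ⦃m₁ m : ℕ⦄, m₁ ≤ m → ‖Rv.tail m - Rv.tail m₁‖ ≤ CV * s ^ m) (hβt : ‖β‖ < t) :
    ∃ K ≥ 0, ∃ N : ℕ, ∀ n m n₁ m₁ : ℕ, n₁ < n → m₁ < m → N ≤ n →
      Ru.U n - Ru.U n₁ = Rv.U m - Rv.U m₁ → ‖α‖ ^ n ≤ K * t ^ m := by
  obtain ⟨cA, hcA, NA, hTA⟩ :=
    Ru.domPoly.exists_mul_pow_le_norm_sub (Ru.a_ne Ru.i0) (hr.trans_lt hrα)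
  obtain ⟨CB, hCB, hTB⟩ :=
    exists_norm_sub_le_mul_pow (hs.trans hst) (Rv.domPoly.isBigO_eval_natCast_mul_pow hβt)
  obtain ⟨NU, hNU⟩ := eventually_atTop.mp <|
    ((isLittleO_pow_pow_of_lt_left (by linarith) hrα).const_mul_left CU).def (half_pos hcA)
  refine ⟨2 * (CB + CV) / cA, by positivity, max NA NU, fun n m n₁ m₁ hn₁ hm₁ hN h => ?_⟩
  have hUsmall : CU * r ^ n ≤ cA / 2 * ‖α‖ ^ n := by
    simpa [abs_of_nonneg (zero_le_one.trans hr)] using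
      (Real.le_norm_self _).trans (hNU n (le_of_max_le_right hN))
  have hVt : CV * s ^ m ≤ CV * t ^ m := by gcongr
  have hTAlow := hTA n (le_of_max_le_left hN) n₁ hn₁
  have hTBup := hTB hm₁.le
  have hTAB := (norm_sub_le_of_U_sub_eq hα hβ h).trans (add_le_add (hU hn₁.le) (hV hm₁.le))
  have hTAsplit := hTAlow.trans (norm_le_norm_add_norm_sub' _
    (Rv.domPoly.eval (m : ℂ) * β ^ m - Rv.domPoly.eval (m₁ : ℂ) * β ^ m₁))
  rw [div_mul_eq_mul_div, le_div_iff₀ hcA]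
  linarith

theorem exists_norm_tail_sub_le_gammaConst_pow {Ru Rv : LinRecSeq} {α β : ℂ}
    (hα : Ru.root Ru.i0 = α) (hβ : Rv.root Rv.i0 = β) {α' r s CU CV : ℝ} (hα' : α' < ‖α‖)
    (hr : 1 < r) (hrα' : r < α') (hCU : 0 ≤ CU)
    (hU : ∀ ⦃n₁ n : ℕ⦄, n₁ ≤ n → ‖Ru.tail n - Ru.tail n₁‖ ≤ CU * r ^ n)
    (hs : 1 ≤ s) (hsβ : s < ‖β‖) (hCV : 0 ≤ CV)
    (hV : ∀ ⦃m₁ m : ℕ⦄, m₁ ≤ m → ‖Rv.tail m - Rv.tail m₁‖ ≤ CV * s ^ m) :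
    ∃ C ≥ 0, ∃ N : ℕ, ∀ n m n₁ m₁ : ℕ, n₁ < n → m₁ < m → N ≤ n →
      Ru.U n - Ru.U n₁ = Rv.U m - Rv.U m₁ →
        ‖Ru.tail n - Ru.tail n₁‖ ≤ C * gammaConst α β α' ^ m := by
  have hA : 1 < ‖α‖ := hr.trans (hrα'.trans hα')
  have hB : 1 < ‖β‖ := hs.trans_lt hsβ
  set ρ := Real.logb ‖α‖ r
  have hρ : 0 < ρ := Real.logb_pos hA hr
  set t := ‖β‖ ^ Real.logb r α'
  have hβt : ‖β‖ < t := by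
    refine lt_of_eq_of_lt (Real.rpow_one _).symm (Real.rpow_lt_rpow_of_exponent_lt hB ?_)
    rw [← Real.logb_self_eq_one hr]
    exact Real.logb_lt_logb hr (by linarith) hrα'
  obtain ⟨K, hK, N, hAK⟩ := exists_pow_le_mul_pow_of_U_sub_eq hα hβ hr.le (hrα'.trans hα') hU
    hs (hsβ.le.trans hβt.le) hCV hV hβt
  refine ⟨CU * K ^ ρ, by positivity, N, fun n m n₁ m₁ hn₁ hm₁ hN h => ?_⟩
  have hAρ : ‖α‖ ^ ρ = r := Real.rpow_logb (by linarith) hA.ne' (by linarith)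
  have htρ : t ^ ρ = gammaConst α β α' := by
    rw [← Real.rpow_mul (by positivity), mul_comm,
      Real.mul_logb (by linarith) hr.ne' (by linarith)]
    rfl
  calc ‖Ru.tail n - Ru.tail n₁‖ ≤ CU * r ^ n := hU hn₁.le
    _ = CU * (‖α‖ ^ n) ^ ρ := by rw [← hAρ, Real.rpow_pow_comm (by positivity)]
    _ ≤ CU * (K * t ^ m) ^ ρ := by
        gcongr
        exact hAK n m n₁ m₁ hn₁ hm₁ hN h
    _ = CU * K ^ ρ * gammaConst α β α' ^ m := by
        rw [Real.mul_rpow hK (by positivity), ← Real.rpow_pow_comm (by positivity), htρ, mul_assoc]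

theorem exists_norm_sub_le_gammaConst_pow_add_pow {Ru Rv : LinRecSeq} {α β : ℂ}
    (hα : Ru.root Ru.i0 = α) (hβ : Rv.root Rv.i0 = β) {α' β' : ℝ}
    (hα'1 : 1 < α') (hα'2 : α' < ‖α‖) (hα'3 : ∀ i, i ≠ Ru.i0 → ‖Ru.root i‖ < α')
    (hβ'1 : 1 < β') (hβ'2 : β' < ‖β‖) (hβ'3 : ∀ i, i ≠ Rv.i0 → ‖Rv.root i‖ < β') :
    ∃ C > 0, ∃ N : ℕ, ∀ n m n₁ m₁ : ℕ, n₁ < n → m₁ < m → N ≤ n →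
      Ru.U n - Ru.U n₁ = Rv.U m - Rv.U m₁ →
        ‖(Ru.domPoly.eval (n : ℂ) * α ^ n - Ru.domPoly.eval (n₁ : ℂ) * α ^ n₁) -
            (Rv.domPoly.eval (m : ℂ) * β ^ m - Rv.domPoly.eval (m₁ : ℂ) * β ^ m₁)‖ ≤
          C * (gammaConst α β α' ^ m + β' ^ m) := by
  obtain ⟨r, hr1, hrα', hUr⟩ := Ru.exists_isBigO_tail hα'1 hα'3
  obtain ⟨s, hs1, hsβ', hVs⟩ := Rv.exists_isBigO_tail hβ'1 hβ'3
  obtain ⟨CU, hCU, hUbd⟩ := exists_norm_sub_le_mul_pow hr1.le hUr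
  obtain ⟨CV, hCV, hVbd⟩ := exists_norm_sub_le_mul_pow hs1.le hVs
  obtain ⟨C, hC, N, hUγ⟩ := exists_norm_tail_sub_le_gammaConst_pow hα hβ hα'2 hr1 hrα' hCU
    hUbd hs1.le (hsβ'.trans hβ'2) hCV hVbd
  refine ⟨C + CV + 1, by linarith, N, fun n m n₁ m₁ hn₁ hm₁ hN h => ?_⟩
  have hγ : 0 ≤ gammaConst α β α' ^ m := pow_nonneg (Real.rpow_nonneg (norm_nonneg _) _) m
  have hβ' : 0 ≤ β' ^ m := pow_nonneg (by linarith) m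
  calc _ ≤ ‖Ru.tail n - Ru.tail n₁‖ + ‖Rv.tail m - Rv.tail m₁‖ := norm_sub_le_of_U_sub_eq hα hβ h
    _ ≤ C * gammaConst α β α' ^ m + CV * β' ^ m :=
        add_le_add (hUγ n m n₁ m₁ hn₁ hm₁ hN h) ((hVbd hm₁.le).trans (by gcongr))
    _ ≤ (C + CV + 1) * (gammaConst α β α' ^ m + β' ^ m) := by nlinarith

theorem final_approximation_general (Ru Rv : LinRecSeq) (α β : ℂ)
    (hU : Ru.HasDomRoot α) (hV : Rv.HasDomRoot β)
    (N₀ M₀ : ℕ)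
    (α' β' : ℝ)
    (hα'1 : 1 < α') (hα'2 : α' < ‖α‖)
    (hα'3 : ∀ i, i ≠ Ru.i0 → ‖Ru.root i‖ < α')
    (hβ'1 : 1 < β') (hβ'2 : β' < ‖β‖)
    (hβ'3 : ∀ i, i ≠ Rv.i0 → ‖Rv.root i‖ < β') :
    1 < GammaConst α β α' β' ∧
    ∃ C₄₀ : ℝ, 0 < C₄₀ ∧ ∃ N M : ℕ,
      ∀ n m n₁ m₁ : ℕ, N₀ ≤ n₁ → n₁ < n → M₀ ≤ m₁ → m₁ < m → N ≤ n → M ≤ m →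
        Ru.U n - Ru.U n₁ = Rv.U m - Rv.U m₁ →
        (Rv.domPoly.eval (m : ℂ) * β ^ m - Rv.domPoly.eval (m₁ : ℂ) * β ^ m₁ ≠ 0) ∧
        ‖(Ru.domPoly.eval (n : ℂ) * α ^ n - Ru.domPoly.eval (n₁ : ℂ) * α ^ n₁) /
            (Rv.domPoly.eval (m : ℂ) * β ^ m - Rv.domPoly.eval (m₁ : ℂ) * β ^ m₁) - 1‖
          ≤ C₄₀ * GammaConst α β α' β' ^ (-(m : ℝ)) := by
  obtain ⟨C, hC, N, hdiff⟩ :=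
    exists_norm_sub_le_gammaConst_pow_add_pow hU.1 hV.1 hα'1 hα'2 hα'3 hβ'1 hβ'2 hβ'3
  obtain ⟨cB, hcB, M, hlow⟩ :=
    Rv.domPoly.exists_mul_pow_le_norm_sub (Rv.a_ne Rv.i0) (hβ'1.trans hβ'2)
  refine ⟨one_lt_GammaConst hα'1 hα'2 hβ'1 hβ'2, 2 * C / cB, by positivity, N, M,
    fun n m n₁ m₁ _ hn₁ _ hm₁ hN hM h => ?_⟩
  have hβm : 0 < ‖β‖ ^ m := pow_pos (by linarith) m
  have hB : 0 < cB * ‖β‖ ^ m := mul_pos hcB hβm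
  refine ⟨norm_pos_iff.mp (hB.trans_le (hlow m hM m₁ hm₁)), ?_⟩
  calc _ ≤ C * (gammaConst α β α' ^ m + β' ^ m) / (cB * ‖β‖ ^ m) :=
        norm_div_sub_one_le hB (hlow m hM m₁ hm₁) (hdiff n m n₁ m₁ hn₁ hm₁ hN h)
    _ ≤ C * (2 * GammaConst α β α' β' ^ (-(m : ℝ)) * ‖β‖ ^ m) / (cB * ‖β‖ ^ m) := by
        gcongr
        exact pow_add_pow_le_GammaConst_rpow_neg hα'1 hα'2 hβ'1 hβ'2 m
    _ = 2 * C / cB * GammaConst α β α' β' ^ (-(m : ℝ)) := by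
        field_simp [hβm.ne']

/-- **Final approximation.** With `γ = |β|^(log α'/log|α|)` and `Γ = min{|β|/β', |β|/γ}`
one has `Γ > 1`, and there are a constant `C₄₀ > 0` and integers `N, M` such that every
solution `(n, m, n₁, m₁)` of `U n − U n₁ = V m − V m₁` with `n > n₁ ≥ N₀`, `m > m₁ ≥ M₀`,
`n ≥ N`, `m ≥ M` satisfies `b(m)βᵐ − b(m₁)β^{m₁} ≠ 0` and
`|(a(n)αⁿ − a(n₁)α^{n₁})/(b(m)βᵐ − b(m₁)β^{m₁}) − 1| ≤ C₄₀·Γ^(−m)`. -/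
theorem final_approximation (Ru Rv : LinRecSeq) (α β : ℂ)
    (hU : Ru.HasDomRoot α) (hV : Rv.HasDomRoot β)
    (hindep : MultIndep α β)
    (hβ1 : 1 < ‖β‖) (hβα : ‖β‖ < ‖α‖)
    (N₀ M₀ : ℕ)
    (hUmono : ∀ n : ℕ, N₀ ≤ n → 0 < |Ru.U n| ∧ |Ru.U n| < |Ru.U (n + 1)|)
    (hVmono : ∀ m : ℕ, M₀ ≤ m → 0 < |Rv.U m| ∧ |Rv.U m| < |Rv.U (m + 1)|)
    (α' β' : ℝ)
    (hα'1 : 1 < α') (hα'2 : α' < ‖α‖)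
    (hα'3 : ∀ i, i ≠ Ru.i0 → ‖Ru.root i‖ < α')
    (hβ'1 : 1 < β') (hβ'2 : β' < ‖β‖)
    (hβ'3 : ∀ i, i ≠ Rv.i0 → ‖Rv.root i‖ < β') :
    1 < GammaConst α β α' β' ∧
    ∃ C₄₀ : ℝ, 0 < C₄₀ ∧ ∃ N M : ℕ,
      ∀ n m n₁ m₁ : ℕ, N₀ ≤ n₁ → n₁ < n → M₀ ≤ m₁ → m₁ < m → N ≤ n → M ≤ m →
        Ru.U n - Ru.U n₁ = Rv.U m - Rv.U m₁ →
        (Rv.domPoly.eval (m : ℂ) * β ^ m - Rv.domPoly.eval (m₁ : ℂ) * β ^ m₁ ≠ 0) ∧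
        ‖(Ru.domPoly.eval (n : ℂ) * α ^ n - Ru.domPoly.eval (n₁ : ℂ) * α ^ n₁) /
            (Rv.domPoly.eval (m : ℂ) * β ^ m - Rv.domPoly.eval (m₁ : ℂ) * β ^ m₁) - 1‖
          ≤ C₄₀ * GammaConst α β α' β' ^ (-(m : ℝ)) :=
  final_approximation_general Ru Rv α β hU hV N₀ M₀ α' β' hα'1 hα'2 hα'3 hβ'1 hβ'2 hβ'3
end
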